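/- Let \(H\) be a (not necessarily induced) subgraph of \(G\) with connected components \(\mathcal{C}\). Then for every edge \(e \in E(G)\), \(S[H](e) = \sum_{C \in \mathcal{C}} S[C](e)\), where \(S[H] : E(G) \to \{0, \tfrac12, 1\}\) is the slice function of \(H\). -/
import Mathlib


open scoped Classical in
/-- The slice of a subgraph `H` of `G`: `1` on `U(H)`, `½` on `I(H)`, `0` elsewhere. -/
noncomputable def sliceFn {V : Type*} (G : SimpleGraph V) (H : G.Subgraph) (e : Sym2 V) : ℝ :=
  if (e ∉ H.edgeSet ∧ ∀ u v, e = s(u, v) → u ∈ H.verts ∧ v ∈ H.verts) then 1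
  else if (∃ u v, e = s(u, v) ∧ u ∈ H.verts ∧ v ∉ H.verts) then 1 / 2
  else 0

open scoped Classical in
lemma slice_eq_aux {V : Type*} (G : SimpleGraph V) (K : G.Subgraph) (u v : V)
    (h : ¬ K.Adj u v) :
    sliceFn G K s(u, v) =
      (if u ∈ K.verts then (1/2 : ℝ) else 0) + (if v ∈ K.verts then (1/2 : ℝ) else 0) := by
  unfold sliceFn
  have hcond1 : (s(u,v) ∉ K.edgeSet ∧ ∀ a b, s(u,v) = s(a,b) → a ∈ K.verts ∧ b ∈ K.verts)
      ↔ (u ∈ K.verts ∧ v ∈ K.verts) := by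
    constructor
    · rintro ⟨-, h2⟩; exact h2 u v rfl
    · rintro ⟨hu, hv⟩
      refine ⟨by simpa [SimpleGraph.Subgraph.mem_edgeSet] using h, ?_⟩
      intro a b hab
      rw [Sym2.eq_iff] at hab
      rcases hab with ⟨rfl, rfl⟩ | ⟨rfl, rfl⟩ <;> exact ⟨‹_›, ‹_›⟩
  have hcond2 : (∃ a b, s(u,v) = s(a,b) ∧ a ∈ K.verts ∧ b ∉ K.verts)
      ↔ ((u ∈ K.verts ∧ v ∉ K.verts) ∨ (v ∈ K.verts ∧ u ∉ K.verts)) := by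
    constructor
    · rintro ⟨a, b, hab, ha, hb⟩
      rw [Sym2.eq_iff] at hab
      rcases hab with ⟨rfl, rfl⟩ | ⟨rfl, rfl⟩
      · exact Or.inl ⟨ha, hb⟩
      · exact Or.inr ⟨ha, hb⟩
    · rintro (⟨ha, hb⟩ | ⟨ha, hb⟩)
      · exact ⟨u, v, rfl, ha, hb⟩
      · exact ⟨v, u, Sym2.eq_swap, ha, hb⟩
  rw [if_congr hcond1 rfl rfl, if_congr hcond2 rfl rfl]
  by_cases hu : u ∈ K.verts <;> by_cases hv : v ∈ K.verts <;> simp [hu, hv] <;> norm_num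

open scoped Classical in
lemma slice_adj_zero {V : Type*} (G : SimpleGraph V) (K : G.Subgraph) (u v : V)
    (h : K.Adj u v) : sliceFn G K s(u, v) = 0 := by
  unfold sliceFn
  rw [if_neg, if_neg]
  · rintro ⟨a, b, hab, ha, hb⟩
    rw [Sym2.eq_iff] at hab
    rcases hab with ⟨rfl, rfl⟩ | ⟨rfl, rfl⟩
    · exact hb h.snd_mem
    · exact hb h.fst_mem
  · rintro ⟨h1, -⟩
    exact h1 (SimpleGraph.Subgraph.mem_edgeSet.mpr h)

open scoped Classical in
lemma slice_nomem_zero {V : Type*} (G : SimpleGraph V) (K : G.Subgraph) (u v : V)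
    (hu : u ∉ K.verts) (hv : v ∉ K.verts) : sliceFn G K s(u, v) = 0 := by
  unfold sliceFn
  rw [if_neg, if_neg]
  · rintro ⟨a, b, hab, ha, hb⟩
    rw [Sym2.eq_iff] at hab
    rcases hab with ⟨rfl, rfl⟩ | ⟨rfl, rfl⟩
    · exact hu ha
    · exact hv ha
  · rintro ⟨-, h2⟩
    exact hu (h2 u v rfl).1

/-- The slice of a subgraph is the sum of the slices of its connected components:
`S[H](e) = ∑_{C ∈ 𝒞} S[C](e)` for every edge `e` of `G`.  The components are
presented as a family of subgraphs `C i ≤ H`, each connected, partitioning the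
vertices of `H`, carrying all edges of `H`, with no `H`-edges between different parts. -/
theorem stmt5 {V : Type*} (G : SimpleGraph V) (H : G.Subgraph)
    (ι : Type*) [Fintype ι] (C : ι → G.Subgraph)
    (hsub : ∀ i, C i ≤ H)
    (hconn : ∀ i, (C i).Connected)
    (hparts : ∀ v ∈ H.verts, ∃! i, v ∈ (C i).verts)
    (hsep : ∀ i j, i ≠ j → ∀ u v, u ∈ (C i).verts → v ∈ (C j).verts → ¬ H.Adj u v)
    (hedges : ∀ u v, H.Adj u v → ∃ i, (C i).Adj u v)
    (e : Sym2 V) (he : e ∈ G.edgeSet) :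
    sliceFn G H e = ∑ i, sliceFn G (C i) e := by
  classical
  induction e using Sym2.ind with
  | _ u v =>
  by_cases hH : H.Adj u v
  · obtain ⟨i₀, hi₀⟩ := hedges u v hH
    rw [slice_adj_zero G H u v hH]
    refine (Finset.sum_eq_zero ?_).symm
    intro k _
    by_cases hk : k = i₀
    · subst hk; exact slice_adj_zero G _ u v hi₀
    · obtain ⟨iu, -, huq⟩ := hparts u hH.fst_mem
      obtain ⟨iv, -, hvq⟩ := hparts v hH.snd_mem
      refine slice_nomem_zero G _ u v (fun hu' => hk ?_) (fun hv' => hk ?_)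
      · exact (huq k hu').trans (huq i₀ hi₀.fst_mem).symm
      · exact (hvq k hv').trans (hvq i₀ hi₀.snd_mem).symm
  · have hCk : ∀ k, ¬ (C k).Adj u v := fun k h => hH ((hsub k).2 h)
    have hsum : ∀ w, w ∈ G.support ∨ True →
        (∑ i, (if w ∈ (C i).verts then (1/2 : ℝ) else 0))
          = if w ∈ H.verts then (1/2 : ℝ) else 0 := by
      intro w _
      by_cases hw : w ∈ H.verts
      · obtain ⟨i₀, hi₀, huq⟩ := hparts w hw
        rw [if_pos hw, Finset.sum_eq_single i₀]
        · rw [if_pos hi₀]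
        · intro b _ hb
          exact if_neg (fun hb' => hb (huq b hb'))
        · intro h; exact absurd (Finset.mem_univ i₀) h
      · rw [if_neg hw]
        refine Finset.sum_eq_zero (fun i _ => if_neg (fun h => hw ((hsub i).1 h)))
    rw [slice_eq_aux G H u v hH]
    have : ∀ k, sliceFn G (C k) s(u, v) =
        (if u ∈ (C k).verts then (1/2 : ℝ) else 0)
          + (if v ∈ (C k).verts then (1/2 : ℝ) else 0) :=
      fun k => slice_eq_aux G (C k) u v (hCk k)
    simp only [this]
    rw [Finset.sum_add_distrib, hsum u (Or.inr trivial), hsum v (Or.inr trivial)]
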